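/- Let w : ℝⁿ → Mat_{n×n}(ℝ) be smooth with w(x) skew-symmetric for all x, and let v : ℝⁿ → ℝⁿ be a smooth vector field such that α^{μν}(x) = − Σ_{a,b} α^{μa}(x) α^{νb}(x) w_{ab}(x) + Σ_λ ( v^λ ∂_λ α^{μν} − α^{λν} ∂_λ v^μ − α^{μλ} ∂_λ v^ν )(x) for all x, μ, ν (i.e., α = −♯w + L_v α). Let (X,η) be a field configuration of the Poisson sigma model, defined and smooth on an open neighborhood of the closed unit square Q = [0,1]², satisfying both equations of motion (E1) and (E2) and the tangential boundary conditions on Q. Then the classical action equals the integral of the pullback of w: ∫_Q L(X,η)(u) du = ∫_Q Σ_{a,b} w_{ab}(X(u)) ∂₁X^a(u) ∂₂X^b(u) du. (Consequently, integrality of the periods of w implies integrality of the classical Poisson sigma model action on such solutions.) -/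

import Mathlib

open MeasureTheory

noncomputable def pd (i : Fin 2) (g : ℝ × ℝ → ℝ) (p : ℝ × ℝ) : ℝ :=
  fderiv ℝ g p (if i = 0 then ((1 : ℝ), (0 : ℝ)) else ((0 : ℝ), (1 : ℝ)))

noncomputable def pdn {n : ℕ} (lam : Fin n) (g : (Fin n → ℝ) → ℝ) (x : Fin n → ℝ) : ℝ :=
  fderiv ℝ g x (Pi.single lam 1)

noncomputable def Lag {n : ℕ} (α : (Fin n → ℝ) → Fin n → Fin n → ℝ)
    (X : ℝ × ℝ → Fin n → ℝ) (η : ℝ × ℝ → Fin n → Fin 2 → ℝ) (p : ℝ × ℝ) : ℝ :=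
  (∑ μ, (η p μ 0 * pd 1 (fun q => X q μ) p - η p μ 1 * pd 0 (fun q => X q μ) p))
    + ∑ μ, ∑ ν, α (X p) μ ν * η p μ 0 * η p ν 1


section Helpers

lemma sum_comm3 {M : Type*} [AddCommMonoid M] {n : ℕ} (f : Fin n → Fin n → Fin n → M) :
    ∑ a, ∑ b, ∑ c, f a b c = ∑ c, ∑ a, ∑ b, f a b c := by
  rw [show (∑ a, ∑ b, ∑ c, f a b c) = ∑ a, ∑ c, ∑ b, f a b c from
    Finset.sum_congr rfl fun a _ => Finset.sum_comm, Finset.sum_comm]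

lemma sum_comm4 {M : Type*} [AddCommMonoid M] {n : ℕ} (f : Fin n → Fin n → Fin n → Fin n → M) :
    ∑ a, ∑ b, ∑ c, ∑ d, f a b c d = ∑ c, ∑ d, ∑ a, ∑ b, f a b c d := by
  rw [show (∑ a, ∑ b, ∑ c, ∑ d, f a b c d) = ∑ a, ∑ c, ∑ d, ∑ b, f a b c d from
    Finset.sum_congr rfl fun a _ => (sum_comm3 fun c d b => f a b c d).symm]
  exact (sum_comm3 fun c d a => ∑ b, f a b c d).symm

lemma algebra_key {n : ℕ} (A : Fin n → Fin n → ℝ) (hA : ∀ μ ν, A μ ν = -A ν μ)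
    (W : Fin n → Fin n → ℝ)
    (V : Fin n → ℝ) (Dv : Fin n → Fin n → ℝ) (Dα : Fin n → Fin n → Fin n → ℝ)
    (E0 E1 P0 P1 R Q0 Q1 : Fin n → ℝ)
    (hrelp : ∀ μ ν, A μ ν = -(∑ a, ∑ b, A μ a * A ν b * W a b)
      + ∑ lam, (V lam * Dα lam μ ν - A lam ν * Dv lam μ - A μ lam * Dv lam ν))
    (hP0 : ∀ μ, P0 μ = -∑ ν, A μ ν * E0 ν) (hP1 : ∀ μ, P1 μ = -∑ ν, A μ ν * E1 ν)
    (hR : ∀ ρ, R ρ = -∑ μ, ∑ ν, Dα ρ μ ν * E0 μ * E1 ν)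
    (hQ0 : ∀ ρ, Q0 ρ = ∑ lam, P1 lam * Dv lam ρ)
    (hQ1 : ∀ ρ, Q1 ρ = ∑ lam, P0 lam * Dv lam ρ) :
    (∑ μ, (E0 μ * P1 μ - E1 μ * P0 μ)) + ∑ μ, ∑ ν, A μ ν * E0 μ * E1 ν
      = (∑ a, ∑ b, W a b * P0 a * P1 b)
        + ∑ ρ, (Q1 ρ * E1 ρ - Q0 ρ * E0 ρ + V ρ * R ρ) := by
  set S0 := ∑ μ, ∑ ν, A μ ν * E0 μ * E1 ν with hS0
  set Sa := ∑ μ, ∑ ν, ∑ lam, V lam * Dα lam μ ν * E0 μ * E1 ν with hSa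
  set Sb := ∑ μ, ∑ ν, ∑ lam, A lam ν * Dv lam μ * E0 μ * E1 ν with hSb
  set Sc := ∑ μ, ∑ ν, ∑ lam, A μ lam * Dv lam ν * E0 μ * E1 ν with hSc
  have h1 : ∑ μ, E0 μ * P1 μ = -S0 := by
    rw [hS0, ← Finset.sum_neg_distrib]
    refine Finset.sum_congr rfl fun μ _ => ?_
    rw [hP1, mul_neg, Finset.mul_sum]
    congr 1
    exact Finset.sum_congr rfl fun ν _ => by ring
  have h2 : ∑ μ, E1 μ * P0 μ = S0 := by
    rw [hS0, Finset.sum_comm]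
    refine Finset.sum_congr rfl fun μ _ => ?_
    rw [hP0, mul_neg, Finset.mul_sum, ← Finset.sum_neg_distrib]
    refine Finset.sum_congr rfl fun ν _ => ?_
    rw [hA ν μ]; ring
  have hLHS : (∑ μ, (E0 μ * P1 μ - E1 μ * P0 μ)) + S0 = -S0 := by
    rw [Finset.sum_sub_distrib, h1, h2]; ring
  have hterm : ∀ a b, W a b * P0 a * P1 b
      = ∑ μ, ∑ ν, A a μ * E0 μ * (A b ν * E1 ν) * W a b := by
    intro a b
    rw [hP0, hP1, show W a b * -(∑ ν, A a ν * E0 ν) * -(∑ ν, A b ν * E1 ν)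
      = (∑ ν, A a ν * E0 ν) * (∑ ν, A b ν * E1 ν) * W a b from by ring,
      Finset.sum_mul_sum, Finset.sum_mul]
    exact Finset.sum_congr rfl fun μ _ => by rw [Finset.sum_mul]
  have hWterm : (∑ a, ∑ b, W a b * P0 a * P1 b)
      = ∑ μ, ∑ ν, (∑ a, ∑ b, A μ a * A ν b * W a b) * E0 μ * E1 ν := by
    simp only [hterm]
    rw [sum_comm4]
    refine Finset.sum_congr rfl fun μ _ => Finset.sum_congr rfl fun ν _ => ?_
    simp only [Finset.sum_mul]
    refine Finset.sum_congr rfl fun a _ => Finset.sum_congr rfl fun b _ => ?_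
    rw [hA a μ, hA b ν]; ring
  have hWterm2 : (∑ a, ∑ b, W a b * P0 a * P1 b) = -S0 + (Sa - Sb - Sc) := by
    rw [hWterm]
    have : ∀ μ ν, (∑ a, ∑ b, A μ a * A ν b * W a b) * E0 μ * E1 ν
        = -(A μ ν * E0 μ * E1 ν)
          + ∑ lam, (V lam * Dα lam μ ν * E0 μ * E1 ν
              - A lam ν * Dv lam μ * E0 μ * E1 ν - A μ lam * Dv lam ν * E0 μ * E1 ν) := by
      intro μ ν
      have hs : (∑ a, ∑ b, A μ a * A ν b * W a b)
          = -A μ ν + ∑ lam, (V lam * Dα lam μ ν - A lam ν * Dv lam μ - A μ lam * Dv lam ν) := by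
        linarith [hrelp μ ν]
      rw [hs, add_mul, add_mul, neg_mul, neg_mul, Finset.sum_mul, Finset.sum_mul]
      congr 1
      exact Finset.sum_congr rfl fun lam _ => by ring
    simp only [this, Finset.sum_add_distrib, Finset.sum_sub_distrib, Finset.sum_neg_distrib]
    rfl
  have hc : ∑ ρ, Q1 ρ * E1 ρ = Sc := by
    have e : ∀ ρ, Q1 ρ * E1 ρ = ∑ lam, ∑ μ, -(A lam μ * E0 μ * (Dv lam ρ * E1 ρ)) := by
      intro ρ
      rw [hQ1, Finset.sum_mul]
      refine Finset.sum_congr rfl fun lam _ => ?_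
      rw [hP0, neg_mul, neg_mul, Finset.sum_mul, Finset.sum_mul, ← Finset.sum_neg_distrib]
      exact Finset.sum_congr rfl fun μ _ => by ring
    simp only [e]
    rw [sum_comm3 fun ρ lam μ => -(A lam μ * E0 μ * (Dv lam ρ * E1 ρ)), hSc]
    refine Finset.sum_congr rfl fun μ _ => Finset.sum_congr rfl fun ν _ =>
      Finset.sum_congr rfl fun lam _ => ?_
    rw [hA μ lam]; ring
  have hb : ∑ ρ, Q0 ρ * E0 ρ = -Sb := by
    have e : ∀ ρ, Q0 ρ * E0 ρ = ∑ lam, ∑ ν, -(A lam ν * E1 ν * (Dv lam ρ * E0 ρ)) := by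
      intro ρ
      rw [hQ0, Finset.sum_mul]
      refine Finset.sum_congr rfl fun lam _ => ?_
      rw [hP1, neg_mul, neg_mul, Finset.sum_mul, Finset.sum_mul, ← Finset.sum_neg_distrib]
      exact Finset.sum_congr rfl fun ν _ => by ring
    simp only [e]
    rw [hSb, ← Finset.sum_neg_distrib]
    refine Finset.sum_congr rfl fun μ _ => ?_
    rw [Finset.sum_comm, ← Finset.sum_neg_distrib]
    refine Finset.sum_congr rfl fun ν _ => ?_
    rw [← Finset.sum_neg_distrib]
    exact Finset.sum_congr rfl fun lam _ => by ring
  have ha : ∑ ρ, V ρ * R ρ = -Sa := by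
    have e : ∀ ρ, V ρ * R ρ = ∑ μ, ∑ ν, -(V ρ * (Dα ρ μ ν * E0 μ * E1 ν)) := by
      intro ρ
      rw [hR, mul_neg, Finset.mul_sum, ← Finset.sum_neg_distrib]
      refine Finset.sum_congr rfl fun μ _ => ?_
      rw [Finset.mul_sum, ← Finset.sum_neg_distrib]
    simp only [e]
    rw [(sum_comm3 fun μ ν ρ => -(V ρ * (Dα ρ μ ν * E0 μ * E1 ν))).symm, hSa,
      ← Finset.sum_neg_distrib]
    refine Finset.sum_congr rfl fun μ _ => ?_
    rw [← Finset.sum_neg_distrib]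
    refine Finset.sum_congr rfl fun ν _ => ?_
    rw [← Finset.sum_neg_distrib]
    refine Finset.sum_congr rfl fun lam _ => by ring
  have hF : ∑ ρ, (Q1 ρ * E1 ρ - Q0 ρ * E0 ρ + V ρ * R ρ) = Sc + Sb - Sa := by
    simp only [Finset.sum_add_distrib, Finset.sum_sub_distrib, hc, hb, ha]
    try ring
  rw [hWterm2, hF]
  linarith [hLHS]

end Helpers

section CalcHelpers

lemma fderiv_apply_pdn {n : ℕ} {f : (Fin n → ℝ) → ℝ} {x : Fin n → ℝ}
    (h : Fin n → ℝ) :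
    fderiv ℝ f x h = ∑ lam, h lam * pdn lam f x := by
  have hx : h = ∑ lam, h lam • (Pi.single lam 1 : Fin n → ℝ) := by
    funext j
    simp [Finset.sum_apply, Pi.single_apply]
  conv_lhs => rw [hx]
  rw [map_sum]
  exact Finset.sum_congr rfl fun lam _ => by
    rw [_root_.map_smul]; rfl

lemma fderiv_pi_apply {n : ℕ} {X : ℝ × ℝ → Fin n → ℝ} {p : ℝ × ℝ}
    (hX : ∀ lam, DifferentiableAt ℝ (fun q => X q lam) p) (e : ℝ × ℝ) (lam : Fin n) :
    fderiv ℝ X p e lam = fderiv ℝ (fun q => X q lam) p e := by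
  have h := fderiv_pi hX
  rw [show X = (fun x i => X x i) from rfl, h]
  rfl

lemma pd_comp {n : ℕ} {f : (Fin n → ℝ) → ℝ} {X : ℝ × ℝ → Fin n → ℝ} {p : ℝ × ℝ}
    (hf : DifferentiableAt ℝ f (X p)) (hX : DifferentiableAt ℝ X p) (i : Fin 2) :
    pd i (fun q => f (X q)) p = ∑ lam, pd i (fun q => X q lam) p * pdn lam f (X p) := by
  have hc : fderiv ℝ (f ∘ X) p = (fderiv ℝ f (X p)).comp (fderiv ℝ X p) :=
    fderiv_comp p hf hX
  have hXc : ∀ lam, DifferentiableAt ℝ (fun q => X q lam) p :=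
    fun lam => (differentiableAt_pi.mp hX) lam
  unfold pd
  rw [show (fun q => f (X q)) = f ∘ X from rfl, hc]
  rw [ContinuousLinearMap.comp_apply, fderiv_apply_pdn]
  exact Finset.sum_congr rfl fun lam _ => by rw [fderiv_pi_apply hXc]

lemma pd_mul {A B : ℝ × ℝ → ℝ} {p : ℝ × ℝ} (hA : DifferentiableAt ℝ A p)
    (hB : DifferentiableAt ℝ B p) (i : Fin 2) :
    pd i (fun q => A q * B q) p = pd i A p * B p + A p * pd i B p := by
  unfold pd
  rw [fderiv_fun_mul hA hB]
  simp only [ContinuousLinearMap.add_apply, ContinuousLinearMap.smul_apply, smul_eq_mul]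
  ring

lemma pd_sum {n : ℕ} {F : Fin n → ℝ × ℝ → ℝ} {p : ℝ × ℝ}
    (hF : ∀ ρ, DifferentiableAt ℝ (F ρ) p) (i : Fin 2) :
    pd i (fun q => ∑ ρ, F ρ q) p = ∑ ρ, pd i (F ρ) p := by
  unfold pd
  rw [fderiv_fun_sum fun ρ _ => hF ρ]
  rw [ContinuousLinearMap.sum_apply]

lemma pd_continuousOn {g : ℝ × ℝ → ℝ} {U : Set (ℝ × ℝ)} (hU : IsOpen U)
    (hg : ContDiffOn ℝ (⊤ : ℕ∞) g U) (i : Fin 2) :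
    ContinuousOn (pd i g) U := by
  have h1 : ContinuousOn (fderivWithin ℝ g U) U :=
    hg.continuousOn_fderivWithin hU.uniqueDiffOn (by exact_mod_cast le_top)
  have h2 : ContinuousOn (fun p => fderiv ℝ g p) U :=
    h1.congr fun p hp => (fderivWithin_of_isOpen hU hp).symm
  exact (ContinuousLinearMap.apply ℝ ℝ
    (if i = 0 then ((1:ℝ), (0:ℝ)) else ((0:ℝ), (1:ℝ)))).continuous.comp_continuousOn h2

noncomputable def gbd {n : ℕ} (v : (Fin n → ℝ) → Fin n → ℝ) (X : ℝ × ℝ → Fin n → ℝ)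
    (η : ℝ × ℝ → Fin n → Fin 2 → ℝ) (j : Fin 2) (q : ℝ × ℝ) : ℝ :=
  ∑ ρ, v (X q) ρ * η q ρ j

end CalcHelpers

lemma key_pointwise {n : ℕ}
    (α : (Fin n → ℝ) → Fin n → Fin n → ℝ)
    (hskew : ∀ x μ ν, α x μ ν = - α x ν μ)
    (w : (Fin n → ℝ) → Fin n → Fin n → ℝ)
    (v : (Fin n → ℝ) → Fin n → ℝ) (hv : ContDiff ℝ (⊤ : ℕ∞) v)
    (hrel : ∀ x μ ν, α x μ ν
      = -(∑ a, ∑ b, α x μ a * α x ν b * w x a b)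
        + ∑ lam, (v x lam * pdn lam (fun y => α y μ ν) x
            - α x lam ν * pdn lam (fun y => v y μ) x
            - α x μ lam * pdn lam (fun y => v y ν) x))
    (U : Set (ℝ × ℝ)) (hU : IsOpen U)
    (X : ℝ × ℝ → Fin n → ℝ) (η : ℝ × ℝ → Fin n → Fin 2 → ℝ)
    (hX : ContDiffOn ℝ (⊤ : ℕ∞) X U) (hη : ContDiffOn ℝ (⊤ : ℕ∞) η U)
    (hE1 : ∀ p ∈ U, ∀ i : Fin 2, ∀ μ,
      pd i (fun q => X q μ) p + ∑ ν, α (X p) μ ν * η p ν i = 0)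
    (hE2 : ∀ p ∈ U, ∀ ρ,
      pd 0 (fun q => η q ρ 1) p - pd 1 (fun q => η q ρ 0) p
        + ∑ μ, ∑ ν, pdn ρ (fun x => α x μ ν) (X p) * η p μ 0 * η p ν 1 = 0)
    (p : ℝ × ℝ) (hp : p ∈ U) :
    Lag α X η p
      = (∑ a, ∑ b, w (X p) a b * pd 0 (fun q => X q a) p * pd 1 (fun q => X q b) p)
        + (pd 0 (gbd v X η 1) p - pd 1 (gbd v X η 0) p) := by
  have hone : (1 : WithTop ℕ∞) ≤ ((⊤:ℕ∞) : WithTop ℕ∞) := by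
    exact_mod_cast (le_top : (1:ℕ∞) ≤ ⊤)
  have hXdA : DifferentiableAt ℝ X p :=
    (hX.differentiableOn (by simp)).differentiableAt (hU.mem_nhds hp)
  have hηdA : DifferentiableAt ℝ η p :=
    (hη.differentiableOn (by simp)).differentiableAt (hU.mem_nhds hp)
  have hηdc : ∀ ρ (j : Fin 2), DifferentiableAt ℝ (fun q => η q ρ j) p := fun ρ j =>
    differentiableAt_pi.mp (differentiableAt_pi.mp hηdA ρ) j
  have hvdc : ∀ ρ, DifferentiableAt ℝ (fun y => v y ρ) (X p) := fun ρ =>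
    ((contDiff_pi.mp hv ρ).differentiable (by simp)).differentiableAt
  have hvXd : ∀ ρ, DifferentiableAt ℝ (fun q => v (X q) ρ) p := fun ρ =>
    DifferentiableAt.comp p (hvdc ρ) hXdA
  have hg1 : pd 0 (gbd v X η 1) p
      = ∑ ρ, (pd 0 (fun q => v (X q) ρ) p * η p ρ 1
          + v (X p) ρ * pd 0 (fun q => η q ρ 1) p) := by
    rw [show gbd v X η 1 = fun q => ∑ ρ, v (X q) ρ * η q ρ 1 from rfl,
      pd_sum (F := fun ρ q => v (X q) ρ * η q ρ 1) (fun ρ => (hvXd ρ).mul (hηdc ρ 1)) 0]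
    exact Finset.sum_congr rfl fun ρ _ => pd_mul (hvXd ρ) (hηdc ρ 1) 0
  have hg0 : pd 1 (gbd v X η 0) p
      = ∑ ρ, (pd 1 (fun q => v (X q) ρ) p * η p ρ 0
          + v (X p) ρ * pd 1 (fun q => η q ρ 0) p) := by
    rw [show gbd v X η 0 = fun q => ∑ ρ, v (X q) ρ * η q ρ 0 from rfl,
      pd_sum (F := fun ρ q => v (X q) ρ * η q ρ 0) (fun ρ => (hvXd ρ).mul (hηdc ρ 0)) 1]
    exact Finset.sum_congr rfl fun ρ _ => pd_mul (hvXd ρ) (hηdc ρ 0) 1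
  have key := algebra_key (α (X p)) (hskew (X p)) (w (X p)) (v (X p))
    (fun lam ρ => pdn lam (fun y => v y ρ) (X p))
    (fun ρ μ ν => pdn ρ (fun y => α y μ ν) (X p))
    (fun μ => η p μ 0) (fun μ => η p μ 1)
    (fun μ => pd 0 (fun q => X q μ) p) (fun μ => pd 1 (fun q => X q μ) p)
    (fun ρ => pd 0 (fun q => η q ρ 1) p - pd 1 (fun q => η q ρ 0) p)
    (fun ρ => pd 1 (fun q => v (X q) ρ) p) (fun ρ => pd 0 (fun q => v (X q) ρ) p)
    (hrel (X p))
    (fun μ => by have h := hE1 p hp 0 μ; linarith)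
    (fun μ => by have h := hE1 p hp 1 μ; linarith)
    (fun ρ => by have h := hE2 p hp ρ; linarith)
    (fun ρ => pd_comp (hvdc ρ) hXdA 1)
    (fun ρ => pd_comp (hvdc ρ) hXdA 0)
  show (∑ μ, (η p μ 0 * pd 1 (fun q => X q μ) p - η p μ 1 * pd 0 (fun q => X q μ) p))
      + (∑ μ, ∑ ν, α (X p) μ ν * η p μ 0 * η p ν 1)
    = (∑ a, ∑ b, w (X p) a b * pd 0 (fun q => X q a) p * pd 1 (fun q => X q b) p)
        + (pd 0 (gbd v X η 1) p - pd 1 (gbd v X η 0) p)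
  rw [hg1, hg0, ← Finset.sum_sub_distrib]
  have hrw : ∑ ρ, ((pd 0 (fun q => v (X q) ρ) p * η p ρ 1
          + v (X p) ρ * pd 0 (fun q => η q ρ 1) p)
      - (pd 1 (fun q => v (X q) ρ) p * η p ρ 0
          + v (X p) ρ * pd 1 (fun q => η q ρ 0) p))
      = ∑ ρ, (pd 0 (fun q => v (X q) ρ) p * η p ρ 1
          - pd 1 (fun q => v (X q) ρ) p * η p ρ 0
          + v (X p) ρ * (pd 0 (fun q => η q ρ 1) p - pd 1 (fun q => η q ρ 0) p)) :=
    Finset.sum_congr rfl fun ρ _ => by ring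
  rw [hrw]
  exact key


/-- Under Vaisman's relation `α = −♯w + L_v α`, for a solution `(X,η)` of
the Poisson sigma model on a neighborhood of the closed unit square `Q = [0,1]²` with
tangential boundary conditions, the classical action equals the integral of the pullback
of `w`: `∫_Q L(X,η) = ∫_Q ∑ w_{ab}(X) ∂₁X^a ∂₂X^b`. -/
theorem stmt7 {n : ℕ} (hn : 1 ≤ n)
    (α : (Fin n → ℝ) → Fin n → Fin n → ℝ) (hα : ContDiff ℝ (⊤ : ℕ∞) α)
    (hskew : ∀ x μ ν, α x μ ν = - α x ν μ)
    (w : (Fin n → ℝ) → Fin n → Fin n → ℝ) (hw : ContDiff ℝ (⊤ : ℕ∞) w)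
    (hwskew : ∀ x a b, w x a b = - w x b a)
    (v : (Fin n → ℝ) → Fin n → ℝ) (hv : ContDiff ℝ (⊤ : ℕ∞) v)
    (hrel : ∀ x μ ν, α x μ ν
      = -(∑ a, ∑ b, α x μ a * α x ν b * w x a b)
        + ∑ lam, (v x lam * pdn lam (fun y => α y μ ν) x
            - α x lam ν * pdn lam (fun y => v y μ) x
            - α x μ lam * pdn lam (fun y => v y ν) x))
    (U : Set (ℝ × ℝ)) (hU : IsOpen U)
    (hQU : Set.Icc (0:ℝ) 1 ×ˢ Set.Icc (0:ℝ) 1 ⊆ U)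
    (X : ℝ × ℝ → Fin n → ℝ) (η : ℝ × ℝ → Fin n → Fin 2 → ℝ)
    (hX : ContDiffOn ℝ (⊤ : ℕ∞) X U) (hη : ContDiffOn ℝ (⊤ : ℕ∞) η U)
    (hE1 : ∀ p ∈ U, ∀ i : Fin 2, ∀ μ,
      pd i (fun q => X q μ) p + ∑ ν, α (X p) μ ν * η p ν i = 0)
    (hE2 : ∀ p ∈ U, ∀ ρ,
      pd 0 (fun q => η q ρ 1) p - pd 1 (fun q => η q ρ 0) p
        + ∑ μ, ∑ ν, pdn ρ (fun x => α x μ ν) (X p) * η p μ 0 * η p ν 1 = 0)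
    (hbd1 : ∀ μ, ∀ t ∈ Set.Icc (0:ℝ) 1, η (t, 0) μ 0 = 0 ∧ η (t, 1) μ 0 = 0)
    (hbd2 : ∀ μ, ∀ t ∈ Set.Icc (0:ℝ) 1, η (0, t) μ 1 = 0 ∧ η (1, t) μ 1 = 0) :
    ∫ u in Set.Icc (0:ℝ) 1 ×ˢ Set.Icc (0:ℝ) 1, Lag α X η u
      = ∫ u in Set.Icc (0:ℝ) 1 ×ˢ Set.Icc (0:ℝ) 1,
          (∑ a, ∑ b, w (X u) a b * pd 0 (fun q => X q a) u * pd 1 (fun q => X q b) u) := by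
  have hone : (1 : WithTop ℕ∞) ≤ ((⊤:ℕ∞) : WithTop ℕ∞) := by
    exact_mod_cast (le_top : (1:ℕ∞) ≤ ⊤)
  set Q : Set (ℝ × ℝ) := Set.Icc (0:ℝ) 1 ×ˢ Set.Icc (0:ℝ) 1 with hQdef
  have hQmeas : MeasurableSet Q := measurableSet_Icc.prod measurableSet_Icc
  have hQcomp : IsCompact Q := isCompact_Icc.prod isCompact_Icc
  -- smoothness of the boundary 1-forms
  have hgbds : ∀ j : Fin 2, ContDiffOn ℝ (⊤ : ℕ∞) (gbd v X η j) U := by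
    intro j
    show ContDiffOn ℝ (⊤ : ℕ∞) (fun q => ∑ ρ, v (X q) ρ * η q ρ j) U
    apply ContDiffOn.sum
    intro ρ _
    exact ((contDiff_pi.mp hv ρ).comp_contDiffOn hX).mul
      (contDiffOn_pi.mp (contDiffOn_pi.mp hη ρ) j)
  -- continuity of integrands
  have hXc : ∀ μ, ContDiffOn ℝ (⊤ : ℕ∞) (fun q => X q μ) U := fun μ => contDiffOn_pi.mp hX μ
  have hRHScont : ContinuousOn (fun u => ∑ a, ∑ b,
      w (X u) a b * pd 0 (fun q => X q a) u * pd 1 (fun q => X q b) u) U := by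
    apply continuousOn_finset_sum; intro a _
    apply continuousOn_finset_sum; intro b _
    exact (((contDiff_pi.mp (contDiff_pi.mp hw a) b).continuous.comp_continuousOn
      hX.continuousOn).mul (pd_continuousOn hU (hXc a) 0)).mul (pd_continuousOn hU (hXc b) 1)
  have hRHSint : MeasureTheory.IntegrableOn (fun u => ∑ a, ∑ b,
      w (X u) a b * pd 0 (fun q => X q a) u * pd 1 (fun q => X q b) u) Q :=
    ContinuousOn.integrableOn_compact hQcomp (hRHScont.mono hQU)
  have hI1 : MeasureTheory.IntegrableOn (pd 0 (gbd v X η 1)) Q :=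
    ContinuousOn.integrableOn_compact hQcomp ((pd_continuousOn hU (hgbds 1) 0).mono hQU)
  have hI0 : MeasureTheory.IntegrableOn (pd 1 (gbd v X η 0)) Q :=
    ContinuousOn.integrableOn_compact hQcomp ((pd_continuousOn hU (hgbds 0) 1).mono hQU)
  have hFint : MeasureTheory.IntegrableOn
      (fun u => pd 0 (gbd v X η 1) u - pd 1 (gbd v X η 0) u) Q := hI1.sub hI0
  -- vanishing of the exact term, first part
  have hzero1 : ∫ u in Q, pd 0 (gbd v X η 1) u = 0 := by
    have hint : MeasureTheory.Integrable (pd 0 (gbd v X η 1))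
        (((volume : Measure ℝ).restrict (Set.Icc 0 1)).prod
          ((volume : Measure ℝ).restrict (Set.Icc 0 1))) := by
      rw [Measure.prod_restrict, ← Measure.volume_eq_prod]
      exact hI1
    rw [hQdef, show (volume : Measure (ℝ × ℝ)) = (volume : Measure ℝ).prod volume from
      Measure.volume_eq_prod ℝ ℝ, ← Measure.prod_restrict,
      MeasureTheory.integral_prod_symm _ hint]
    have hz : ∀ y ∈ Set.Icc (0:ℝ) 1,
        (∫ x in Set.Icc (0:ℝ) 1, pd 0 (gbd v X η 1) (x, y)) = 0 := by
      intro y hy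
      have hmem : ∀ x ∈ Set.uIcc (0:ℝ) 1, (x, y) ∈ U := by
        intro x hx
        rw [Set.uIcc_of_le (zero_le_one' ℝ)] at hx
        exact hQU (Set.mk_mem_prod hx hy)
      have hderiv : ∀ x ∈ Set.uIcc (0:ℝ) 1,
          HasDerivAt (fun t => gbd v X η 1 (t, y)) (pd 0 (gbd v X η 1) (x, y)) x := by
        intro x hx
        have hd : DifferentiableAt ℝ (gbd v X η 1) (x, y) :=
          ((hgbds 1).differentiableOn (by simp)).differentiableAt (hU.mem_nhds (hmem x hx))
        have hl : HasDerivAt (fun t : ℝ => (t, y)) ((1:ℝ), (0:ℝ)) x :=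
          (hasDerivAt_id x).prodMk (hasDerivAt_const x y)
        have hcomp := hd.hasFDerivAt.comp_hasDerivAt x hl
        simpa [pd, Function.comp_def] using hcomp
      have hii : IntervalIntegrable (fun x => pd 0 (gbd v X η 1) (x, y)) volume 0 1 := by
        apply ContinuousOn.intervalIntegrable
        exact (pd_continuousOn hU (hgbds 1) 0).comp
          ((continuous_id.prodMk continuous_const).continuousOn) hmem
      rw [MeasureTheory.integral_Icc_eq_integral_Ioc,
        ← intervalIntegral.integral_of_le (zero_le_one' ℝ),
        intervalIntegral.integral_eq_sub_of_hasDerivAt hderiv hii]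
      have e1 : gbd v X η 1 ((1:ℝ), y) = 0 :=
        Finset.sum_eq_zero fun ρ _ => by rw [(hbd2 ρ y hy).2, mul_zero]
      have e0 : gbd v X η 1 ((0:ℝ), y) = 0 :=
        Finset.sum_eq_zero fun ρ _ => by rw [(hbd2 ρ y hy).1, mul_zero]
      rw [e1, e0, sub_zero]
    calc (∫ y in Set.Icc (0:ℝ) 1, ∫ x in Set.Icc (0:ℝ) 1, pd 0 (gbd v X η 1) (x, y))
        = ∫ _y in Set.Icc (0:ℝ) 1, (0:ℝ) :=
          MeasureTheory.setIntegral_congr_fun measurableSet_Icc hz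
      _ = 0 := by simp
  -- vanishing of the exact term, second part
  have hzero0 : ∫ u in Q, pd 1 (gbd v X η 0) u = 0 := by
    have hint : MeasureTheory.Integrable (pd 1 (gbd v X η 0))
        (((volume : Measure ℝ).restrict (Set.Icc 0 1)).prod
          ((volume : Measure ℝ).restrict (Set.Icc 0 1))) := by
      rw [Measure.prod_restrict, ← Measure.volume_eq_prod]
      exact hI0
    rw [hQdef, show (volume : Measure (ℝ × ℝ)) = (volume : Measure ℝ).prod volume from
      Measure.volume_eq_prod ℝ ℝ, ← Measure.prod_restrict,
      MeasureTheory.integral_prod _ hint]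
    have hz : ∀ x ∈ Set.Icc (0:ℝ) 1,
        (∫ y in Set.Icc (0:ℝ) 1, pd 1 (gbd v X η 0) (x, y)) = 0 := by
      intro x hx
      have hmem : ∀ y ∈ Set.uIcc (0:ℝ) 1, (x, y) ∈ U := by
        intro y hy
        rw [Set.uIcc_of_le (zero_le_one' ℝ)] at hy
        exact hQU (Set.mk_mem_prod hx hy)
      have hderiv : ∀ y ∈ Set.uIcc (0:ℝ) 1,
          HasDerivAt (fun t => gbd v X η 0 (x, t)) (pd 1 (gbd v X η 0) (x, y)) y := by
        intro y hy
        have hd : DifferentiableAt ℝ (gbd v X η 0) (x, y) :=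
          ((hgbds 0).differentiableOn (by simp)).differentiableAt (hU.mem_nhds (hmem y hy))
        have hl : HasDerivAt (fun t : ℝ => (x, t)) ((0:ℝ), (1:ℝ)) y :=
          (hasDerivAt_const y x).prodMk (hasDerivAt_id y)
        have hcomp := hd.hasFDerivAt.comp_hasDerivAt y hl
        simpa [pd, Function.comp_def] using hcomp
      have hii : IntervalIntegrable (fun y => pd 1 (gbd v X η 0) (x, y)) volume 0 1 := by
        apply ContinuousOn.intervalIntegrable
        exact (pd_continuousOn hU (hgbds 0) 1).comp
          ((continuous_const.prodMk continuous_id).continuousOn) hmem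
      rw [MeasureTheory.integral_Icc_eq_integral_Ioc,
        ← intervalIntegral.integral_of_le (zero_le_one' ℝ),
        intervalIntegral.integral_eq_sub_of_hasDerivAt hderiv hii]
      have e1 : gbd v X η 0 (x, (1:ℝ)) = 0 :=
        Finset.sum_eq_zero fun ρ _ => by rw [(hbd1 ρ x hx).2, mul_zero]
      have e0 : gbd v X η 0 (x, (0:ℝ)) = 0 :=
        Finset.sum_eq_zero fun ρ _ => by rw [(hbd1 ρ x hx).1, mul_zero]
      rw [e1, e0, sub_zero]
    calc (∫ x in Set.Icc (0:ℝ) 1, ∫ y in Set.Icc (0:ℝ) 1, pd 1 (gbd v X η 0) (x, y))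
        = ∫ _x in Set.Icc (0:ℝ) 1, (0:ℝ) :=
          MeasureTheory.setIntegral_congr_fun measurableSet_Icc hz
      _ = 0 := by simp
  have hFzero : ∫ u in Q, (pd 0 (gbd v X η 1) u - pd 1 (gbd v X η 0) u) = 0 := by
    rw [MeasureTheory.integral_sub hI1 hI0, hzero1, hzero0, sub_zero]
  calc ∫ u in Q, Lag α X η u
      = ∫ u in Q, ((∑ a, ∑ b,
          w (X u) a b * pd 0 (fun q => X q a) u * pd 1 (fun q => X q b) u)
        + (pd 0 (gbd v X η 1) u - pd 1 (gbd v X η 0) u)) :=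
        MeasureTheory.setIntegral_congr_fun hQmeas (fun p hp =>
          key_pointwise α hskew w v hv hrel U hU X η hX hη hE1 hE2 p (hQU hp))
    _ = (∫ u in Q, ∑ a, ∑ b,
          w (X u) a b * pd 0 (fun q => X q a) u * pd 1 (fun q => X q b) u)
        + ∫ u in Q, (pd 0 (gbd v X η 1) u - pd 1 (gbd v X η 0) u) :=
        MeasureTheory.integral_add hRHSint hFint
    _ = ∫ u in Q, ∑ a, ∑ b,
          w (X u) a b * pd 0 (fun q => X q a) u * pd 1 (fun q => X q b) u := by
        rw [hFzero, add_zero]
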